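/- arXiv:2205.15168 — 7 statements merged into one kernel-verified Lean document; each statement's English description precedes it below -/
import Mathlib

section
/- Let K be an algebraically closed field and k ≥ 3 an integer. Then there exists a real constant c > 0 such that for every positive integer n there is a nonempty Zariski-open subset U of the space K^{n,…,n} of k-tensors with all sides equal to n such that every T ∈ U satisfies Q(T) ≥ c · n^{1/(k−1)}. (Lower bound on the generic subrank of k-tensors.) -/
/-- The space of order-`k` tensors of format `n` over `K`. -/
abbrev TensorK (K : Type*) {k : ℕ} (n : Fin k → ℕ) : Type _ := (∀ j, Fin (n j)) → K

/-- `S` is a restriction of `T` (for order-`k` tensors). -/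
def RestrictK {K : Type*} [CommRing K] {k : ℕ} {m n : Fin k → ℕ}
    (S : TensorK K m) (T : TensorK K n) : Prop :=
  ∃ A : ∀ j, Matrix (Fin (m j)) (Fin (n j)) K,
    ∀ i, S i = ∑ a : ∀ j, Fin (n j), (∏ j, A j (i j) (a j)) * T a

/-- The order-`k` unit tensor `I_r`: ones on the main diagonal, zeroes elsewhere. -/
def unitTensorK (K : Type*) [CommRing K] (k r : ℕ) : TensorK K (fun _ : Fin k => r) :=
  fun i => if ∀ j j', i j = i j' then 1 else 0

/-- The subrank `Q(T)` of an order-`k` tensor: the largest `r` with `I_r ≤ T`. -/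
noncomputable def subrankK {K : Type*} [CommRing K] {k : ℕ} {n : Fin k → ℕ}
    (T : TensorK K n) : ℕ :=
  sSup {r : ℕ | RestrictK (unitTensorK K k r) T}

/-- A subset of `ι → K` is Zariski-closed if it is the common zero set of a family of
polynomials in the coordinates. -/
def IsZariskiClosed {K : Type*} [CommRing K] {ι : Type*} [Fintype ι]
    (Z : Set (ι → K)) : Prop :=
  ∃ P : Set (MvPolynomial ι K), Z = {x | ∀ p ∈ P, MvPolynomial.eval x p = 0}

/-- A subset is Zariski-open if its complement is Zariski-closed. -/
def IsZariskiOpen {K : Type*} [CommRing K] {ι : Type*} [Fintype ι]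
    (U : Set (ι → K)) : Prop :=
  IsZariskiClosed Uᶜ

/-!
Write `k = m + 1` and let `r = ⌊n^{1/m}⌋`, so `r^m ≤ n`. Fix an injection `cst : [r] → [n]` and
an injection `ε : [r]^m → [n]`. For a tensor `T`, consider the `r^m × r^m` submatrix `M` of its
flattening (first `m` modes against the last one) with rows `cst ∘ t` and columns `ε t'`. Its
determinant is a polynomial in the entries of `T`, equal to `1` at a suitable 0/1 tensor, so
`det M ≠ 0` is a nonempty Zariski-open condition. When it holds, restricting each of the first `m`
modes to the image of `cst`, and the last mode through the columns of `M⁻¹` indexed by the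
constant tuples, turns `T` into `I_r`. Finally `r ≥ n^{1/m} / 2`.
-/

lemma floor_rpow_inv_pow_le (n : ℕ) {m : ℕ} (hm : m ≠ 0) : ⌊(n : ℝ) ^ (m⁻¹ : ℝ)⌋₊ ^ m ≤ n := by
  have h := pow_le_pow_left₀ (Nat.cast_nonneg _)
    (Nat.floor_le (by positivity : 0 ≤ (n : ℝ) ^ (m⁻¹ : ℝ))) m
  rw [Real.rpow_inv_natCast_pow (Nat.cast_nonneg n) hm] at h
  exact_mod_cast h

section Restriction

open Finset Function

variable {K : Type*} {m n r : ℕ}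

section CommRing

variable [CommRing K]

def lastFlattening (T : TensorK K (fun _ : Fin (m + 1) => n)) : Matrix (Fin m → Fin n) (Fin n) K :=
  Matrix.of fun p b => T (Fin.snoc p b)

lemma sum_prod_mul_eq_sum_snoc (A : Fin (m + 1) → Matrix (Fin r) (Fin n) K)
    (T : TensorK K (fun _ : Fin (m + 1) => n)) (i : Fin (m + 1) → Fin r) :
    ∑ a : Fin (m + 1) → Fin n, (∏ j, A j (i j) (a j)) * T a =
      ∑ b, A (Fin.last m) (i (Fin.last m)) b *
        ∑ p : Fin m → Fin n, (∏ j, A j.castSucc (i j.castSucc) (p j)) * T (Fin.snoc p b) := by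
  rw [← (Fin.snocEquiv fun _ => Fin n).sum_comp, Fintype.sum_prod_type]
  simp only [Fin.snocEquiv_apply, Fin.prod_univ_castSucc, Fin.snoc_castSucc, Fin.snoc_last,
    mul_sum, mul_comm, mul_assoc]
  rfl

lemma unitTensorK_succ_apply (i : Fin (m + 1) → Fin r) :
    unitTensorK K (m + 1) r i = if Fin.init i = fun _ => i (Fin.last m) then 1 else 0 := by
  refine if_congr ⟨fun h => funext fun j => h _ _, fun h j j' => ?_⟩ rfl rfl
  have hlast : ∀ j, i j = i (Fin.last m) :=
    Fin.lastCases rfl fun j => congrFun h j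
  rw [hlast j, hlast j']

lemma restrictK_unitTensorK_of_isUnit_det (cst : Fin r → Fin n) (ε : (Fin m → Fin r) → Fin n)
    (T : TensorK K (fun _ : Fin (m + 1) => n))
    (hT : IsUnit ((lastFlattening T).submatrix (cst ∘ ·) ε).det) :
    RestrictK (unitTensorK K (m + 1) r) T := by
  classical
  set M := (lastFlattening T).submatrix (cst ∘ ·) ε
  let select : Matrix (Fin r) (Fin n) K := Matrix.of fun x b => if cst x = b then 1 else 0
  let solve : Matrix (Fin r) (Fin n) K :=
    Matrix.of fun l b => ∑ t, if ε t = b then M⁻¹ t (fun _ => l) else 0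
  refine ⟨Fin.snoc (fun _ => select) solve, fun i => ?_⟩
  have hselect : ∀ b, ∑ p : Fin m → Fin n, (∏ j, select (i j.castSucc) (p j)) * T (Fin.snoc p b)
      = T (Fin.snoc (cst ∘ Fin.init i) b) := by
    intro b
    simp only [select, Matrix.of_apply, prod_boole, mem_univ, true_implies, boole_mul]
    rw [Fintype.sum_eq_single (cst ∘ Fin.init i)]
    · exact if_pos fun _ => rfl
    · exact fun p hp => if_neg fun h => hp (funext h).symm
  have hsolve : ∀ l, ∑ b, solve l b * T (Fin.snoc (cst ∘ Fin.init i) b) =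
      (M * M⁻¹) (Fin.init i) (fun _ => l) := by
    intro l
    simp only [solve, Matrix.of_apply, sum_mul, ite_mul, zero_mul, Matrix.mul_apply]
    rw [sum_comm]
    simp [M, lastFlattening, mul_comm]
  rw [unitTensorK_succ_apply, sum_prod_mul_eq_sum_snoc]
  simp only [Fin.snoc_last, Fin.snoc_castSucc, hselect, hsolve, Matrix.mul_nonsing_inv _ hT,
    Matrix.one_apply]

lemma exists_submatrix_lastFlattening_eq_one {cst : Fin r → Fin n} (hcst : Injective cst)
    {ε : (Fin m → Fin r) → Fin n} (hε : Injective ε) :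
    ∃ T : TensorK K (fun _ : Fin (m + 1) => n), (lastFlattening T).submatrix (cst ∘ ·) ε = 1 := by
  classical
  refine ⟨Set.indicator (Set.range fun t => Fin.snoc (cst ∘ t) (ε t)) 1, ?_⟩
  ext t t'
  simp [lastFlattening, Set.indicator_apply, Fin.snoc_inj, hcst.comp_left.eq_iff, hε.eq_iff,
    Matrix.one_apply]

lemma isZariskiOpen_setOf_eval_ne_zero {ι : Type*} [Fintype ι] (p : MvPolynomial ι K) :
    IsZariskiOpen {x : ι → K | MvPolynomial.eval x p ≠ 0} :=
  ⟨{p}, by ext; simp⟩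

lemma isZariskiOpen_setOf_det_submatrix_lastFlattening_ne_zero {ι : Type*} [Fintype ι]
    [DecidableEq ι] (f : ι → Fin m → Fin n) (g : ι → Fin n) :
    IsZariskiOpen
      {T : TensorK K (fun _ : Fin (m + 1) => n) | ((lastFlattening T).submatrix f g).det ≠ 0} := by
  convert isZariskiOpen_setOf_eval_ne_zero
    ((lastFlattening (MvPolynomial.X (R := K))).submatrix f g).det using 4
  rw [RingHom.map_det]
  congr 1
  ext
  simp [lastFlattening]

end CommRing

section Field

variable [Field K]

lemma le_of_restrictK_unitTensorK (hm : m ≠ 0) {s : ℕ} {T : TensorK K (fun _ : Fin (m + 1) => n)}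
    (h : RestrictK (unitTensorK K (m + 1) s) T) : s ≤ n := by
  classical
  obtain ⟨A, hA⟩ := h
  have : Nonempty (Fin m) := ⟨⟨0, Nat.pos_of_ne_zero hm⟩⟩
  let C : Matrix (Fin n) (Fin s) K := Matrix.of fun b l =>
    ∑ p : Fin m → Fin n, (∏ j, A j.castSucc l (p j)) * T (Fin.snoc p b)
  have hAC : A (Fin.last m) * C = 1 := by
    ext i l
    have := hA (Fin.snoc (fun _ => l) i)
    rw [unitTensorK_succ_apply, sum_prod_mul_eq_sum_snoc] at this
    simpa [Fin.init_snoc, Matrix.one_apply, C, Matrix.mul_apply, funext_iff, forall_const,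
      eq_comm (a := l)] using this.symm
  calc s = (A (Fin.last m) * C).rank := by rw [hAC, Matrix.rank_one, Fintype.card_fin]
    _ ≤ (A (Fin.last m)).rank := Matrix.rank_mul_le_left _ _
    _ ≤ n := (Matrix.rank_le_card_width _).trans_eq (Fintype.card_fin n)

lemma le_subrankK (hm : m ≠ 0) {T : TensorK K (fun _ : Fin (m + 1) => n)}
    (h : RestrictK (unitTensorK K (m + 1) r) T) : r ≤ subrankK T :=
  le_csSup ⟨n, fun _ hs => le_of_restrictK_unitTensorK hm hs⟩ h

end Field

end Restriction

theorem generic_subrank_lower_bound_k_general (K : Type*) [Field K]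
    (k : ℕ) (hk : 3 ≤ k) :
    ∃ c : ℝ, 0 < c ∧ ∀ n : ℕ, 0 < n →
      ∃ U : Set (TensorK K (fun _ : Fin k => n)),
        U.Nonempty ∧ IsZariskiOpen U ∧
          ∀ T ∈ U, c * (n : ℝ) ^ ((1 : ℝ) / (k - 1)) ≤ (subrankK T : ℝ) := by
  obtain ⟨m, rfl⟩ : ∃ m, k = m + 1 := ⟨k - 1, by omega⟩
  have hm : m ≠ 0 := by omega
  refine ⟨1 / 2, by norm_num, fun n hn => ?_⟩
  set r := ⌊(n : ℝ) ^ (m⁻¹ : ℝ)⌋₊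
  have hrn : r ^ m ≤ n := floor_rpow_inv_pow_le n hm
  obtain ⟨ε⟩ : Nonempty ((Fin m → Fin r) ↪ Fin n) :=
    Function.Embedding.nonempty_of_card_le (by simpa using hrn)
  let cst : Fin r ↪ Fin n := Fin.castLEEmb ((Nat.le_self_pow hm r).trans hrn)
  obtain ⟨T₀, hT₀⟩ := exists_submatrix_lastFlattening_eq_one (K := K) cst.injective ε.injective
  refine ⟨{T | ((lastFlattening T).submatrix (cst ∘ ·) ε).det ≠ 0}, ⟨T₀, by simp [hT₀]⟩,
    isZariskiOpen_setOf_det_submatrix_lastFlattening_ne_zero _ _, fun T hT => ?_⟩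
  have hroot : 1 ≤ (n : ℝ) ^ (m⁻¹ : ℝ) :=
    Real.one_le_rpow (by exact_mod_cast hn) (by positivity)
  calc 1 / 2 * (n : ℝ) ^ ((1 : ℝ) / ((m + 1 : ℕ) - 1)) = (n : ℝ) ^ (m⁻¹ : ℝ) / 2 := by
        push_cast; ring_nf
    _ ≤ r := (Nat.div_two_lt_floor hroot).le
    _ ≤ subrankK T := by
        exact_mod_cast le_subrankK hm (restrictK_unitTensorK_of_isUnit_det cst ε T hT.isUnit)

/-- Lower bound on the generic subrank of `k`-tensors: there is a constant `c > 0`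
such that generically `Q(T) ≥ c · n^{1/(k−1)}`. -/
theorem generic_subrank_lower_bound_k (K : Type*) [Field K] [IsAlgClosed K]
    (k : ℕ) (hk : 3 ≤ k) :
    ∃ c : ℝ, 0 < c ∧ ∀ n : ℕ, 0 < n →
      ∃ U : Set (TensorK K (fun _ : Fin k => n)),
        U.Nonempty ∧ IsZariskiOpen U ∧
          ∀ T ∈ U, c * (n : ℝ) ^ ((1 : ℝ) / (k - 1)) ≤ (subrankK T : ℝ) :=
  generic_subrank_lower_bound_k_general K k hk
end

section
/- Let K be an infinite field. There exist linear subspaces X₁, X₂, X₃ ⊆ Mat_{3,3}, each of dimension 3, such that X₁[1] + X₂[2] + X₃[3] = K^{3,3,3}. -/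
set_option linter.unusedVariables false

/-- The space of 3-tensors of format `n₁ × n₂ × n₃` over `K`. -/
abbrev Tensor3 (K : Type*) (n₁ n₂ n₃ : ℕ) : Type _ := Fin n₁ × Fin n₂ × Fin n₃ → K

/-- `X[1]`: the subspace of tensors all of whose first-direction slices lie in `X`. -/
def sliceSub1 {K : Type*} [Field K] {n₁ n₂ n₃ : ℕ}
    (X : Submodule K (Matrix (Fin n₂) (Fin n₃) K)) :
    Submodule K (Tensor3 K n₁ n₂ n₃) where
  carrier := {T | ∀ i, Matrix.of (fun j k => T (i, j, k)) ∈ X}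
  add_mem' := fun hS hT i => X.add_mem (hS i) (hT i)
  zero_mem' := fun i => X.zero_mem
  smul_mem' := fun c S hS i => X.smul_mem c (hS i)

/-- `X[2]`: the subspace of tensors all of whose second-direction slices lie in `X`. -/
def sliceSub2 {K : Type*} [Field K] {n₁ n₂ n₃ : ℕ}
    (X : Submodule K (Matrix (Fin n₁) (Fin n₃) K)) :
    Submodule K (Tensor3 K n₁ n₂ n₃) where
  carrier := {T | ∀ j, Matrix.of (fun i k => T (i, j, k)) ∈ X}
  add_mem' := fun hS hT j => X.add_mem (hS j) (hT j)
  zero_mem' := fun j => X.zero_mem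
  smul_mem' := fun c S hS j => X.smul_mem c (hS j)

/-- `X[3]`: the subspace of tensors all of whose third-direction slices lie in `X`. -/
def sliceSub3 {K : Type*} [Field K] {n₁ n₂ n₃ : ℕ}
    (X : Submodule K (Matrix (Fin n₁) (Fin n₂) K)) :
    Submodule K (Tensor3 K n₁ n₂ n₃) where
  carrier := {T | ∀ k, Matrix.of (fun i j => T (i, j, k)) ∈ X}
  add_mem' := fun hS hT k => X.add_mem (hS k) (hT k)
  zero_mem' := fun k => X.zero_mem
  smul_mem' := fun c S hS k => X.smul_mem c (hS k)

/-!
Each `Xᵢ[i]` has dimension `9`, so the three of them must form a direct sum of `K^{3,3,3}`.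
We take for `Xᵢ` the span of three integer matrices whose first rows are the standard basis
vectors, which makes `dim Xᵢ = 3` clear. The `27` tensors obtained by placing one of these
matrices in one slice span all of `K^{3,3,3}`, because the integer `27 × 27` matrix they form
has an explicit integer left inverse; this certificate is checked once over `ℤ` and then mapped
to `K`, so the construction works over every field.
-/

namespace Tensor3

variable {R : Type*} [Zero R] {n₁ n₂ n₃ : ℕ}

def single₁ (a : Fin n₁) (M : Matrix (Fin n₂) (Fin n₃) R) : Tensor3 R n₁ n₂ n₃ :=
  fun t => if t.1 = a then M t.2.1 t.2.2 else 0

def single₂ (b : Fin n₂) (M : Matrix (Fin n₁) (Fin n₃) R) : Tensor3 R n₁ n₂ n₃ :=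
  fun t => if t.2.1 = b then M t.1 t.2.2 else 0

def single₃ (c : Fin n₃) (M : Matrix (Fin n₁) (Fin n₂) R) : Tensor3 R n₁ n₂ n₃ :=
  fun t => if t.2.2 = c then M t.1 t.2.1 else 0

section Map

variable {S F : Type*} [Zero S] [FunLike F R S] [ZeroHomClass F R S] (f : F)

theorem comp_single₁ (a : Fin n₁) (M : Matrix (Fin n₂) (Fin n₃) R) :
    f ∘ single₁ a M = single₁ (n₁ := n₁) a (M.map f) := by
  ext t; simp only [single₁, Function.comp_apply, apply_ite f, map_zero, Matrix.map_apply]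

theorem comp_single₂ (b : Fin n₂) (M : Matrix (Fin n₁) (Fin n₃) R) :
    f ∘ single₂ b M = single₂ (n₂ := n₂) b (M.map f) := by
  ext t; simp only [single₂, Function.comp_apply, apply_ite f, map_zero, Matrix.map_apply]

theorem comp_single₃ (c : Fin n₃) (M : Matrix (Fin n₁) (Fin n₂) R) :
    f ∘ single₃ c M = single₃ (n₃ := n₃) c (M.map f) := by
  ext t; simp only [single₃, Function.comp_apply, apply_ite f, map_zero, Matrix.map_apply]

end Map

end Tensor3

open Tensor3

section SliceSubmodules

variable {K : Type*} [Field K] {n₁ n₂ n₃ : ℕ}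

theorem single₁_mem_sliceSub1 {X : Submodule K (Matrix (Fin n₂) (Fin n₃) K)} (a : Fin n₁)
    {M : Matrix (Fin n₂) (Fin n₃) K} (hM : M ∈ X) : single₁ a M ∈ sliceSub1 X := by
  intro i
  by_cases h : i = a
  · subst h; convert hM; ext; simp [single₁]
  · convert X.zero_mem; ext; simp [single₁, h]

theorem single₂_mem_sliceSub2 {X : Submodule K (Matrix (Fin n₁) (Fin n₃) K)} (b : Fin n₂)
    {M : Matrix (Fin n₁) (Fin n₃) K} (hM : M ∈ X) : single₂ b M ∈ sliceSub2 X := by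
  intro j
  by_cases h : j = b
  · subst h; convert hM; ext; simp [single₂]
  · convert X.zero_mem; ext; simp [single₂, h]

theorem single₃_mem_sliceSub3 {X : Submodule K (Matrix (Fin n₁) (Fin n₂) K)} (c : Fin n₃)
    {M : Matrix (Fin n₁) (Fin n₂) K} (hM : M ∈ X) : single₃ c M ∈ sliceSub3 X := by
  intro k
  by_cases h : k = c
  · subst h; convert hM; ext; simp [single₃]
  · convert X.zero_mem; ext; simp [single₃, h]

end SliceSubmodules

theorem Submodule.eq_top_of_row_mem {R ι : Type*} [Semiring R] [Fintype ι] [DecidableEq ι]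
    {A B : Matrix ι ι R} (hBA : B * A = 1) {S : Submodule R (ι → R)} (hS : ∀ p, A p ∈ S) :
    S = ⊤ := by
  have hspan : Submodule.span R (Set.range A.row) = ⊤ := by
    rw [← range_vecMulLinear, LinearMap.range_eq_top]
    exact Matrix.vecMul_surjective_iff_exists_left_inverse.mpr ⟨B, hBA⟩
  exact top_le_iff.mp (hspan ▸ Submodule.span_le.mpr (Set.range_subset_iff.mpr hS))

theorem Matrix.linearIndependent_of_row_eq_single {R m n : Type*} [Semiring R] [Finite n]
    [DecidableEq n] {M : n → Matrix m n R} (r : m) (hM : ∀ c, M c r = Pi.single c 1) :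
    LinearIndependent R M := by
  refine LinearIndependent.of_comp (LinearMap.proj (R := R) (φ := fun _ : m => n → R) r) ?_
  convert (Pi.basisFun R n).linearIndependent
  ext c : 1
  exact (hM c).trans (Pi.basisFun_apply R n c).symm

namespace Tensor333

def gen₁ : Fin 3 → Matrix (Fin 3) (Fin 3) ℤ :=
  ![!![1, 0, 0; 0, 0, 1; 0, 1, 1], !![0, 1, 0; 1, 0, 0; 1, 0, 0], !![0, 0, 1; 0, 0, 0; 0, 0, 0]]

def gen₂ : Fin 3 → Matrix (Fin 3) (Fin 3) ℤ :=
  ![!![1, 0, 0; 0, 1, 1; 0, 0, 0], !![0, 1, 0; 0, 0, 0; 0, 0, 1], !![0, 0, 1; 0, 0, 0; 1, 1, 0]]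

def gen₃ : Fin 3 → Matrix (Fin 3) (Fin 3) ℤ :=
  ![!![1, 0, 0; 1, 0, 0; 0, 0, 1], !![0, 1, 0; 1, 0, 0; 0, 0, 1], !![0, 0, 1; 0, 0, 1; 0, 1, 0]]

abbrev Idx : Type := Fin 3 × Fin 3 × Fin 3

/-- Row `(d, b, c)` is the generator `c` of `X_{d+1}` placed in the slice `b` of direction
`d + 1`. -/
def generatorMatrix : Matrix Idx Idx ℤ := Matrix.of fun p =>
  ![single₁ p.2.1 (gen₁ p.2.2), single₂ p.2.1 (gen₂ p.2.2), single₃ p.2.1 (gen₃ p.2.2)] p.1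

def certificateTable : Matrix (Fin 27) (Fin 27) ℤ :=
  !![0, 1, 2, 0, 0, 0, 1, 1, -1, 0, 1, -1, 0, -2, -1, -1, -1, -1, 1, -1, 0, -2, 2, 1, -1, 1, 1;
    0, 0, 0, 0, 0, 0, 0, 0, -1, 0, 1, 0, 0, 0, 0, 0, 0, 0, 0, 0, 0, 0, 0, 0, 0, 0, 0;
    0, 0, 1, 0, 0, 0, 0, 0, 0, 0, 0, 0, 0, 0, 0, 0, 0, 0, 0, 0, 0, 0, 0, 0, 0, 0, 0;
    0, 1, 2, 0, 0, 0, 1, 1, -1, 0, 1, -1, 0, -2, -1, -1, -1, -1, 0, 0, 0, -2, 2, 1, -1, 1, 1;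
    0, 0, 0, 0, 0, 0, 0, 0, -1, 0, 1, 0, 0, 0, 0, 0, 0, 0, 0, 0, 0, -1, 1, 0, 0, 0, 0;
    0, 0, 1, 0, 0, 0, 0, 0, 0, 0, 0, 0, 0, 0, 0, 0, 0, 0, 0, 0, 0, 0, 0, 0, -1, 1, 0;
    0, 0, -2, 0, 0, 0, -1, -1, 2, 0, -2, 1, 0, 2, 1, 1, 1, 1, 0, 0, 0, 2, -2, -1, 1, -1, -1;
    0, 0, 1, 0, 0, 1, 0, 0, 0, 0, 0, 0, 0, 0, 0, 0, 1, 0, 0, 0, 0, 0, 0, 0, -1, 0, 0;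
    1, -1, -4, 0, 0, -1, -1, -1, 1, 0, -1, 1, 0, 2, 1, 1, 0, 1, -1, 1, 0, 2, -2, -1, 3, -2, -1;
    1, -1, -4, 0, 0, 0, -1, -1, 2, -1, -2, 1, 0, 2, 1, 1, 0, 0, 0, 1, 0, 3, -2, -1, 3, -2, -1;
    0, -1, -2, 0, 0, -1, -1, -1, 1, 1, -1, 1, 0, 2, 1, 1, 1, 1, -1, 1, 0, 2, -2, -1, 1, -1, -1;
    0, 0, 0, 0, 0, 1, 0, 0, 0, 0, 0, 0, 0, 0, 0, 0, 0, 0, 0, 0, 0, 0, 0, 0, 0, 0, 0;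
    1, 0, -2, 0, 1, 1, 0, 0, 1, -1, -1, 0, 0, 1, 1, 1, 0, 0, 0, 0, -1, 1, -1, -1, 2, -2, -1;
    1, -2, -4, -1, 0, 0, -1, -1, 1, -1, -1, 1, 1, 2, 1, 2, 0, 0, 0, 1, 0, 3, -2, -1, 3, -2, -1;
    -1, 1, 2, 1, 0, 0, 0, 0, 0, 1, 0, 0, 0, 0, 0, -1, 1, 1, 0, -1, 0, -1, 0, 0, -2, 1, 0;
    -1, 1, 4, 0, 0, 0, 1, 1, -2, 0, 2, -1, 0, -3, -2, -2, -1, -1, 1, -1, 1, -3, 3, 2, -3, 3, 2;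
    1, -1, -2, 0, 0, -1, 0, 0, 0, 0, 0, 0, 0, 1, 0, 1, -1, 0, -1, 1, 0, 1, -1, 0, 2, -1, -1;
    -1, 1, 4, 0, 0, 1, 1, 1, -2, 0, 2, -1, 0, -3, -1, -1, 0, -1, 1, -1, 0, -3, 3, 1, -3, 2, 2;
    0, -1, -1, 0, 0, 0, 0, -1, -1, 1, 1, 1, 0, 1, 1, 1, 1, 1, -1, 1, 0, 0, -1, -1, 0, -1, -1;
    0, 1, 0, 0, 0, 0, 0, 1, 1, -1, -1, 0, 0, -1, -1, -1, -1, -1, 1, -1, 0, 0, 1, 1, 0, 1, 1;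
    0, 0, 0, 0, 0, 0, 0, 0, 1, 0, 0, 0, 0, 0, 0, 0, 0, 0, 0, 0, 0, 0, 0, 0, 0, 0, 0;
    1, -1, -2, 0, 0, 0, 0, 0, 0, 0, 0, 0, 0, 1, 1, 1, 0, 0, -1, 1, 0, 1, -1, -1, 2, -2, -1;
    -1, 1, 1, 0, 0, 0, 0, 0, 0, 0, 0, 0, 0, -1, 0, -1, 0, 0, 1, -1, 0, -1, 1, 1, -1, 1, 1;
    0, 0, 0, 0, 0, 0, 0, 0, 1, 0, -1, 0, 0, 1, 0, 0, 0, 0, 0, 0, 0, 1, -1, 0, 0, 0, 0;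
    -1, 0, 2, 0, 0, 0, 0, 0, -1, 1, 1, 0, 0, 0, 0, 0, 1, 1, 0, 0, 0, -1, 0, 0, -2, 1, 0;
    0, 1, 2, 0, 0, 1, 1, 1, 0, -1, 0, -1, 0, -2, -1, -1, -1, -1, 1, -1, 0, -1, 2, 1, -1, 1, 1;
    0, 0, -1, 0, 0, -1, 0, 0, 0, 0, 0, 0, 0, 0, 0, 0, 0, 0, 0, 0, 0, 0, 0, 0, 1, 0, 0]

def certificate : Matrix Idx Idx ℤ :=
  certificateTable.submatrix (fun p => ⟨9 * p.1 + 3 * p.2.1 + p.2.2, by omega⟩)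
    (fun p => ⟨9 * p.1 + 3 * p.2.1 + p.2.2, by omega⟩)

set_option maxHeartbeats 1000000 in
set_option maxRecDepth 10000 in
theorem certificate_mul_generatorMatrix : certificate * generatorMatrix = 1 := by decide

def genSpan (K : Type*) [Field K] (g : Fin 3 → Matrix (Fin 3) (Fin 3) ℤ) :
    Submodule K (Matrix (Fin 3) (Fin 3) K) :=
  Submodule.span K (Set.range fun c => (g c).map (Int.castRingHom K))

theorem finrank_genSpan (K : Type*) [Field K] {g : Fin 3 → Matrix (Fin 3) (Fin 3) ℤ}
    (hg : ∀ c, g c 0 = Pi.single c 1) : Module.finrank K (genSpan K g) = 3 := by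
  rw [genSpan, finrank_span_eq_card, Fintype.card_fin]
  refine Matrix.linearIndependent_of_row_eq_single 0 fun c => ?_
  ext d
  simp only [Matrix.map_apply, hg, Pi.single_apply]
  split_ifs <;> simp

end Tensor333

open Tensor333

theorem tensor_space_decomposition_333_general (K : Type*) [Field K] :
    ∃ (X₁ X₂ X₃ : Submodule K (Matrix (Fin 3) (Fin 3) K)),
      Module.finrank K X₁ = 3 ∧ Module.finrank K X₂ = 3 ∧ Module.finrank K X₃ = 3 ∧
      sliceSub1 (n₁ := 3) X₁ ⊔ sliceSub2 (n₂ := 3) X₂ ⊔ sliceSub3 (n₃ := 3) X₃ = ⊤ := by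
  let f := Int.castRingHom K
  refine ⟨genSpan K gen₁, genSpan K gen₂, genSpan K gen₃, finrank_genSpan K (by decide),
    finrank_genSpan K (by decide), finrank_genSpan K (by decide), ?_⟩
  refine Submodule.eq_top_of_row_mem (A := generatorMatrix.map f) (B := certificate.map f)
    (by rw [← Matrix.map_mul, certificate_mul_generatorMatrix, Matrix.map_one f (map_zero f)
      (map_one f)]) ?_
  rintro ⟨d, b, c⟩
  have hgen : ∀ g c, (g c).map f ∈ genSpan K g := fun g c => Submodule.subset_span ⟨c, rfl⟩
  fin_cases d
  · refine Submodule.mem_sup_left <| Submodule.mem_sup_left ?_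
    change f ∘ single₁ b (gen₁ c) ∈ _
    exact comp_single₁ f b (gen₁ c) ▸ single₁_mem_sliceSub1 b (hgen gen₁ c)
  · refine Submodule.mem_sup_left <| Submodule.mem_sup_right ?_
    change f ∘ single₂ b (gen₂ c) ∈ _
    exact comp_single₂ f b (gen₂ c) ▸ single₂_mem_sliceSub2 b (hgen gen₂ c)
  · refine Submodule.mem_sup_right ?_
    change f ∘ single₃ b (gen₃ c) ∈ _
    exact comp_single₃ f b (gen₃ c) ▸ single₃_mem_sliceSub3 b (hgen gen₃ c)

/-- There exist 3-dimensional subspaces `X₁, X₂, X₃ ⊆ Mat_{3,3}` with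
`X₁[1] + X₂[2] + X₃[3] = K^{3,3,3}`. -/
theorem tensor_space_decomposition_333 (K : Type*) [Field K] [Infinite K] :
    ∃ (X₁ X₂ X₃ : Submodule K (Matrix (Fin 3) (Fin 3) K)),
      Module.finrank K X₁ = 3 ∧ Module.finrank K X₂ = 3 ∧ Module.finrank K X₃ = 3 ∧
      sliceSub1 (n₁ := 3) X₁ ⊔ sliceSub2 (n₂ := 3) X₂ ⊔ sliceSub3 (n₃ := 3) X₃ = ⊤ :=
  tensor_space_decomposition_333_general K
end

section
/- Let K be an infinite field and d a positive integer. There exist linear subspaces X₁, X₂, X₃ ⊆ Mat_{3d,3d}, each of dimension 3d², such that X₁[1] + X₂[2] + X₃[3] = K^{3d,3d,3d}. -/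
set_option linter.unusedVariables false

/-! For `d = 1` take `X₁` the diagonal matrices, `X₂ = span {E_{t,t} + E_{t,t+1}}` and
`X₃ = span {E_{t,t} + E_{t,t-1} + E_{t-1,t}}` (indices mod 3). Putting one of these nine basis
matrices into one slice gives 27 tensors with entries 0 and 1 spanning `X₁[1] + X₂[2] + X₃[3]`;
they are unitriangular for a suitable order of the 27 positions, so they span `K^{3,3,3}` over
any field.

For general `d` replace each `Xᵢ` by `Xᵢ ⊗ Mat_d`, of dimension `3d²`: a tensor in
`K^{3d,3d,3d}` is a `d × d × d` array of `3 × 3 × 3` blocks, and decomposing every block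
decomposes the tensor. -/

open Submodule

theorem span_range_indicator_eq_top_of_triangular {R ι κ : Type*} [Ring R] [Fintype ι]
    [DecidableEq ι] (P : κ → ι → Prop) [∀ c q, Decidable (P c q)] (r : ι → ℕ)
    (h : ∀ p, ∃ c, P c p ∧ ∀ q, P c q → q ≠ p → r q < r p) :
    span R (Set.range fun c q => if P c q then (1 : R) else 0) = ⊤ := by
  set V := span R (Set.range fun c q => if P c q then (1 : R) else 0)
  suffices hsingle : ∀ p, Pi.single p (1 : R) ∈ V by
    rw [eq_top_iff, ← (Pi.basisFun R ι).span_eq, span_le]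
    rintro _ ⟨p, rfl⟩
    simpa using hsingle p
  intro p
  induction hp : r p using Nat.strong_induction_on generalizing p with
  | _ n ih =>
    obtain ⟨c, hcp, hc⟩ := h p
    have hsum : (fun q => if P c q then (1 : R) else 0)
        = Pi.single p 1 + ∑ q ∈ Finset.univ.filter (fun q => P c q) |>.erase p, Pi.single q 1 := by
      rw [Finset.add_sum_erase _ (fun q => Pi.single q (1 : R)) (by simpa using hcp)]
      ext x
      simp [Finset.sum_apply, Pi.single_apply]
    have hgen : (fun q => if P c q then (1 : R) else 0) ∈ V := subset_span ⟨c, rfl⟩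
    have hlower : ∑ q ∈ Finset.univ.filter (fun q => P c q) |>.erase p, Pi.single q (1 : R) ∈ V :=
      sum_mem fun q hq => by
        rw [Finset.mem_erase, Finset.mem_filter] at hq
        exact ih (r q) (hp ▸ hc q hq.2.2 hq.1) q rfl
    simpa [hsum] using V.sub_mem hgen hlower

section BlowUp

variable {K : Type*} [Field K] {n₁ n₂ n₃ : ℕ} (d₁ d₂ d₃ : ℕ)

def matrixBlocks :
    Matrix (Fin (n₁ * d₁)) (Fin (n₂ * d₂)) K ≃ₗ[K]
      (Fin d₁ × Fin d₂ → Matrix (Fin n₁) (Fin n₂) K) where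
  toFun M uv := Matrix.of fun a b => M (finProdFinEquiv (a, uv.1)) (finProdFinEquiv (b, uv.2))
  invFun F := Matrix.of fun i j =>
    F ((finProdFinEquiv.symm i).2, (finProdFinEquiv.symm j).2)
      (finProdFinEquiv.symm i).1 (finProdFinEquiv.symm j).1
  map_add' _ _ := rfl
  map_smul' _ _ := rfl
  left_inv M := by ext; simp only [Matrix.of_apply, Prod.mk.eta, Equiv.apply_symm_apply]
  right_inv F := by ext; simp only [Matrix.of_apply, Equiv.symm_apply_apply]

def tensorBlocks :
    Tensor3 K (n₁ * d₁) (n₂ * d₂) (n₃ * d₃) ≃ₗ[K]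
      (Fin d₁ × Fin d₂ × Fin d₃ → Tensor3 K n₁ n₂ n₃) where
  toFun T uvw abc := T (finProdFinEquiv (abc.1, uvw.1), finProdFinEquiv (abc.2.1, uvw.2.1),
    finProdFinEquiv (abc.2.2, uvw.2.2))
  invFun F ijk := F ((finProdFinEquiv.symm ijk.1).2, (finProdFinEquiv.symm ijk.2.1).2,
      (finProdFinEquiv.symm ijk.2.2).2)
    ((finProdFinEquiv.symm ijk.1).1, (finProdFinEquiv.symm ijk.2.1).1,
      (finProdFinEquiv.symm ijk.2.2).1)
  map_add' _ _ := rfl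
  map_smul' _ _ := rfl
  left_inv T := by ext; simp only [Prod.mk.eta, Equiv.apply_symm_apply]
  right_inv F := by ext; simp only [Equiv.symm_apply_apply]

/-- `X ⊗ Mat_{d₁,d₂}`, with `Fin (n * d)` read as `Fin n × Fin d`. -/
def blowUp (X : Submodule K (Matrix (Fin n₁) (Fin n₂) K)) :
    Submodule K (Matrix (Fin (n₁ * d₁)) (Fin (n₂ * d₂)) K) :=
  (pi Set.univ fun _ => X).comap (matrixBlocks d₁ d₂).toLinearMap

theorem finrank_blowUp (X : Submodule K (Matrix (Fin n₁) (Fin n₂) K)) :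
    Module.finrank K (blowUp d₁ d₂ X) = d₁ * d₂ * Module.finrank K X := by
  have hinj : Function.Injective (X.subtype.compLeft (Fin d₁ × Fin d₂)) :=
    fun f g hfg => funext fun uv => Subtype.ext (congrFun hfg uv)
  have hpi : pi Set.univ (fun _ => X) = LinearMap.range (X.subtype.compLeft (Fin d₁ × Fin d₂)) := by
    rw [LinearMap.range_compLeft, X.range_subtype]
  rw [blowUp, comap_equiv_eq_map_symm, LinearEquiv.finrank_map_eq, hpi,
    LinearMap.finrank_range_of_inj hinj, Module.finrank_pi_fintype]
  simp [Finset.sum_const, Fintype.card_prod]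

theorem mem_sliceSub1_blowUp_iff (X : Submodule K (Matrix (Fin n₂) (Fin n₃) K))
    (T : Tensor3 K (n₁ * d₁) (n₂ * d₂) (n₃ * d₃)) :
    T ∈ sliceSub1 (blowUp d₂ d₃ X) ↔ ∀ b, tensorBlocks d₁ d₂ d₃ T b ∈ sliceSub1 X := by
  constructor
  · intro h uvw a
    exact h (finProdFinEquiv (a, uvw.1)) (uvw.2.1, uvw.2.2) trivial
  · intro h i vw _
    obtain ⟨⟨a, u⟩, rfl⟩ := finProdFinEquiv.surjective i
    exact h (u, vw) a

theorem mem_sliceSub2_blowUp_iff (X : Submodule K (Matrix (Fin n₁) (Fin n₃) K))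
    (T : Tensor3 K (n₁ * d₁) (n₂ * d₂) (n₃ * d₃)) :
    T ∈ sliceSub2 (blowUp d₁ d₃ X) ↔ ∀ b, tensorBlocks d₁ d₂ d₃ T b ∈ sliceSub2 X := by
  constructor
  · intro h uvw b
    exact h (finProdFinEquiv (b, uvw.2.1)) (uvw.1, uvw.2.2) trivial
  · intro h j uw _
    obtain ⟨⟨b, v⟩, rfl⟩ := finProdFinEquiv.surjective j
    exact h (uw.1, v, uw.2) b

theorem mem_sliceSub3_blowUp_iff (X : Submodule K (Matrix (Fin n₁) (Fin n₂) K))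
    (T : Tensor3 K (n₁ * d₁) (n₂ * d₂) (n₃ * d₃)) :
    T ∈ sliceSub3 (blowUp d₁ d₂ X) ↔ ∀ b, tensorBlocks d₁ d₂ d₃ T b ∈ sliceSub3 X := by
  constructor
  · intro h uvw c
    exact h (finProdFinEquiv (c, uvw.2.2)) (uvw.1, uvw.2.1) trivial
  · intro h k uv _
    obtain ⟨⟨c, w⟩, rfl⟩ := finProdFinEquiv.surjective k
    exact h (uv.1, uv.2, w) c

theorem sliceSub_blowUp_sup_eq_top {X₁ : Submodule K (Matrix (Fin n₂) (Fin n₃) K)}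
    {X₂ : Submodule K (Matrix (Fin n₁) (Fin n₃) K)} {X₃ : Submodule K (Matrix (Fin n₁) (Fin n₂) K)}
    (h : sliceSub1 (n₁ := n₁) X₁ ⊔ sliceSub2 (n₂ := n₂) X₂ ⊔ sliceSub3 (n₃ := n₃) X₃ = ⊤) :
    sliceSub1 (n₁ := n₁ * d₁) (blowUp d₂ d₃ X₁) ⊔ sliceSub2 (n₂ := n₂ * d₂) (blowUp d₁ d₃ X₂) ⊔
      sliceSub3 (n₃ := n₃ * d₃) (blowUp d₁ d₂ X₃) = ⊤ := by
  refine eq_top_iff.2 fun T _ => ?_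
  have hblock : ∀ b, ∃ A ∈ sliceSub1 X₁, ∃ B ∈ sliceSub2 X₂, ∃ C ∈ sliceSub3 X₃,
      A + B + C = tensorBlocks d₁ d₂ d₃ T b := by
    intro b
    obtain ⟨AB, hAB, C, hC, hsum⟩ := mem_sup.1 (h ▸ mem_top : tensorBlocks d₁ d₂ d₃ T b ∈ _)
    obtain ⟨A, hA, B, hB, rfl⟩ := mem_sup.1 hAB
    exact ⟨A, hA, B, hB, C, hC, hsum⟩
  choose A hA B hB C hC hsum using hblock
  have hT : T = (tensorBlocks d₁ d₂ d₃).symm A + (tensorBlocks d₁ d₂ d₃).symm B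
      + (tensorBlocks d₁ d₂ d₃).symm C := by
    rw [← map_add, ← map_add, LinearEquiv.eq_symm_apply]
    exact (funext hsum).symm
  rw [hT]
  refine add_mem (add_mem (mem_sup_left (mem_sup_left ?_)) (mem_sup_left (mem_sup_right ?_)))
    (mem_sup_right ?_)
  · exact (mem_sliceSub1_blowUp_iff d₁ d₂ d₃ X₁ _).2 (by simpa using hA)
  · exact (mem_sliceSub2_blowUp_iff d₁ d₂ d₃ X₂ _).2 (by simpa using hB)
  · exact (mem_sliceSub3_blowUp_iff d₁ d₂ d₃ X₃ _).2 (by simpa using hC)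

end BlowUp

section ShiftPattern

variable (K : Type*) [Field K] {n : ℕ}

def shiftPattern (S : Finset (Fin n × Fin n)) (t : Fin n) : Matrix (Fin n) (Fin n) K :=
  Matrix.of fun a b => if (a - t, b - t) ∈ S then 1 else 0

def shiftSpan (S : Finset (Fin n × Fin n)) : Submodule K (Matrix (Fin n) (Fin n) K) :=
  span K (Set.range (shiftPattern K S))

variable {K}

theorem linearIndependent_shiftPattern [NeZero n] {S : Finset (Fin n × Fin n)}
    (hS : ∀ a, (a, a) ∈ S ↔ a = 0) : LinearIndependent K (shiftPattern K S) := by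
  refine LinearIndependent.of_comp (Matrix.diagLinearMap (Fin n) K K) ?_
  convert (Pi.basisFun K (Fin n)).linearIndependent using 1
  ext t a
  simp [shiftPattern, hS, sub_eq_zero, Pi.single_apply]

theorem finrank_shiftSpan [NeZero n] {S : Finset (Fin n × Fin n)} (hS : ∀ a, (a, a) ∈ S ↔ a = 0) :
    Module.finrank K (shiftSpan K S) = n := by
  rw [shiftSpan, finrank_span_eq_card (linearIndependent_shiftPattern hS), Fintype.card_fin]

variable (S : Finset (Fin n × Fin n)) (t : Fin n) {m : ℕ} (s : Fin m)

theorem shiftPattern_mem_shiftSpan : shiftPattern K S t ∈ shiftSpan K S :=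
  subset_span (Set.mem_range_self t)

theorem indicator_mem_sliceSub1_shiftSpan :
    (fun p : Fin m × Fin n × Fin n =>
      if p.1 = s ∧ (p.2.1 - t, p.2.2 - t) ∈ S then (1 : K) else 0) ∈ sliceSub1 (shiftSpan K S) := by
  intro i
  by_cases hi : i = s
  · convert shiftPattern_mem_shiftSpan S t using 1
    ext j k
    simp [shiftPattern, hi]
  · convert (shiftSpan K S).zero_mem using 1
    ext j k
    simp [hi]

theorem indicator_mem_sliceSub2_shiftSpan :
    (fun p : Fin n × Fin m × Fin n =>
      if p.2.1 = s ∧ (p.1 - t, p.2.2 - t) ∈ S then (1 : K) else 0) ∈ sliceSub2 (shiftSpan K S) := by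
  intro j
  by_cases hj : j = s
  · convert shiftPattern_mem_shiftSpan S t using 1
    ext i k
    simp [shiftPattern, hj]
  · convert (shiftSpan K S).zero_mem using 1
    ext i k
    simp [hj]

theorem indicator_mem_sliceSub3_shiftSpan :
    (fun p : Fin n × Fin n × Fin m =>
      if p.2.2 = s ∧ (p.1 - t, p.2.1 - t) ∈ S then (1 : K) else 0) ∈ sliceSub3 (shiftSpan K S) := by
  intro k
  by_cases hk : k = s
  · convert shiftPattern_mem_shiftSpan S t using 1
    ext i j
    simp [shiftPattern, hk]
  · convert (shiftSpan K S).zero_mem using 1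
    ext i j
    simp [hk]

end ShiftPattern

def diagPattern : Finset (Fin 3 × Fin 3) := {(0, 0)}

def dominoPattern : Finset (Fin 3 × Fin 3) := {(0, 0), (0, 1)}

def cornerPattern : Finset (Fin 3 × Fin 3) := {(0, 0), (0, 2), (2, 0)}

def generatorSupport :
    (Fin 3 × Fin 3) ⊕ (Fin 3 × Fin 3) ⊕ (Fin 3 × Fin 3) → Fin 3 × Fin 3 × Fin 3 → Prop
  | .inl (t, s), (i, j, k) => i = s ∧ (j - t, k - t) ∈ diagPattern
  | .inr (.inl (t, s)), (i, j, k) => j = s ∧ (i - t, k - t) ∈ dominoPattern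
  | .inr (.inr (t, s)), (i, j, k) => k = s ∧ (i - t, j - t) ∈ cornerPattern

instance (c) (p) : Decidable (generatorSupport c p) := by
  rcases c with ⟨t, s⟩ | ⟨t, s⟩ | ⟨t, s⟩ <;> unfold generatorSupport <;> infer_instance

/-- Positions with `j = k` come first, being covered by the diagonal matrices alone; the others
are ordered by `k - i`. -/
def pivotRank (p : Fin 3 × Fin 3 × Fin 3) : ℕ :=
  3 * (if p.2.1 = p.2.2 then 0 else 1) + (p.2.2 - p.1).val

theorem generatorSupport_triangular (p : Fin 3 × Fin 3 × Fin 3) :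
    ∃ c, generatorSupport c p ∧ ∀ q, generatorSupport c q → q ≠ p → pivotRank q < pivotRank p := by
  revert p
  decide +kernel

theorem sliceSub_shiftSpan_sup_eq_top (K : Type*) [Field K] :
    sliceSub1 (n₁ := 3) (shiftSpan K diagPattern) ⊔ sliceSub2 (n₂ := 3) (shiftSpan K dominoPattern)
      ⊔ sliceSub3 (n₃ := 3) (shiftSpan K cornerPattern) = ⊤ := by
  rw [eq_top_iff, ← span_range_indicator_eq_top_of_triangular generatorSupport pivotRank
    generatorSupport_triangular, span_le]
  rintro _ ⟨⟨t, s⟩ | ⟨t, s⟩ | ⟨t, s⟩, rfl⟩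
  · exact mem_sup_left (mem_sup_left (indicator_mem_sliceSub1_shiftSpan _ t s))
  · exact mem_sup_left (mem_sup_right (indicator_mem_sliceSub2_shiftSpan _ t s))
  · exact mem_sup_right (indicator_mem_sliceSub3_shiftSpan _ t s)

theorem tensor_space_decomposition_blowup_general (K : Type*) [Field K] (d : ℕ) :
    ∃ (X₁ X₂ X₃ : Submodule K (Matrix (Fin (3 * d)) (Fin (3 * d)) K)),
      Module.finrank K X₁ = 3 * d ^ 2 ∧ Module.finrank K X₂ = 3 * d ^ 2 ∧
      Module.finrank K X₃ = 3 * d ^ 2 ∧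
      sliceSub1 (n₁ := 3 * d) X₁ ⊔ sliceSub2 (n₂ := 3 * d) X₂ ⊔
        sliceSub3 (n₃ := 3 * d) X₃ = ⊤ := by
  have hrank {S : Finset (Fin 3 × Fin 3)} (hS : ∀ a, (a, a) ∈ S ↔ a = 0) :
      Module.finrank K (blowUp d d (shiftSpan K S)) = 3 * d ^ 2 := by
    rw [finrank_blowUp, finrank_shiftSpan hS]
    ring
  exact ⟨blowUp d d (shiftSpan K diagPattern), blowUp d d (shiftSpan K dominoPattern),
    blowUp d d (shiftSpan K cornerPattern), hrank (by decide), hrank (by decide),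
    hrank (by decide), sliceSub_blowUp_sup_eq_top d d d (sliceSub_shiftSpan_sup_eq_top K)⟩

/-- For every positive integer `d` there exist subspaces
`X₁, X₂, X₃ ⊆ Mat_{3d,3d}`, each of dimension `3d²`, with
`X₁[1] + X₂[2] + X₃[3] = K^{3d,3d,3d}`. -/
theorem tensor_space_decomposition_blowup (K : Type*) [Field K] [Infinite K]
    (d : ℕ) (hd : 0 < d) :
    ∃ (X₁ X₂ X₃ : Submodule K (Matrix (Fin (3 * d)) (Fin (3 * d)) K)),
      Module.finrank K X₁ = 3 * d ^ 2 ∧ Module.finrank K X₂ = 3 * d ^ 2 ∧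
      Module.finrank K X₃ = 3 * d ^ 2 ∧
      sliceSub1 (n₁ := 3 * d) X₁ ⊔ sliceSub2 (n₂ := 3 * d) X₂ ⊔
        sliceSub3 (n₃ := 3 * d) X₃ = ⊤ :=
  tensor_space_decomposition_blowup_general K d
end

section
/- Let K be a field, n a positive integer, and r ≤ n. For a tensor T ∈ K^{n,n,n}, we have Q(T) ≥ r if and only if there exist invertible n×n matrices g₁, g₂, g₃ over K and a tensor S ∈ X_r such that T_{ijk} = Σ_{a,b,c} (g₁)_{ia} (g₂)_{jb} (g₃)_{kc} S_{abc} for all i,j,k. (The set of tensors of subrank at least r is the image of the map ψ_r : GL_n × GL_n × GL_n × X_r → K^{n,n,n}, (g₁,g₂,g₃,S) ↦ (g₁⊗g₂⊗g₃)S.) -/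
/-- `S` is a restriction of `T`. -/
def Restrict3 {K : Type*} [CommRing K] {m₁ m₂ m₃ n₁ n₂ n₃ : ℕ}
    (S : Tensor3 K m₁ m₂ m₃) (T : Tensor3 K n₁ n₂ n₃) : Prop :=
  ∃ (A : Matrix (Fin m₁) (Fin n₁) K) (B : Matrix (Fin m₂) (Fin n₂) K)
    (C : Matrix (Fin m₃) (Fin n₃) K),
    ∀ i j k, S (i, j, k) = ∑ a, ∑ b, ∑ c, A i a * B j b * C k c * T (a, b, c)

/-- The unit tensor `I_r`. -/
def unitTensor3 (K : Type*) [CommRing K] (r : ℕ) : Tensor3 K r r r :=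
  fun p => if p.1 = p.2.1 ∧ p.2.1 = p.2.2 then 1 else 0

/-- The subrank `Q(T)`: the largest `r` such that `I_r ≤ T`. -/
noncomputable def subrank3 {K : Type*} [CommRing K] {n₁ n₂ n₃ : ℕ}
    (T : Tensor3 K n₁ n₂ n₃) : ℕ :=
  sSup {r : ℕ | Restrict3 (unitTensor3 K r) T}

/-- Membership in `X_r`: the `[r]×[r]×[r]` subtensor vanishes off the diagonal and has
nonzero diagonal entries. -/
def MemXr {K : Type*} [CommRing K] {n : ℕ} (r : ℕ) (T : Tensor3 K n n n) : Prop :=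
  (∀ i j k : Fin n, (i : ℕ) < r → (j : ℕ) < r → (k : ℕ) < r →
    ¬(i = j ∧ j = k) → T (i, j, k) = 0) ∧
  (∀ i : Fin n, (i : ℕ) < r → T (i, i, i) ≠ 0)

/-!
A restriction `(A, B, C)` acts on `Tensor3 K n₁ n₂ n₃ = Fin n₁ × Fin n₂ × Fin n₃ → K` as the
Kronecker product `A ⊗ₖ (B ⊗ₖ C)`, so restrictions compose and invertible ones can be undone.

If `I_r ≤ T` via `(A, B, C)`, evaluating on the slices `(i, j, j)` gives a right inverse of `A`,
and likewise (after rotating the legs) for `B` and `C`. Their rows are therefore linearly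
independent and extend to invertible `g₁, g₂, g₃`, and `(g₁ ⊗ g₂ ⊗ g₃) T` restricts to `I_r` on
`[r]³`, i.e. lies in `X_r`. Conversely, a tensor in `X_r` restricts to `I_r` by selecting the
first `r` coordinates of each leg and rescaling the third leg by the inverse diagonal entries.
-/

open Matrix Finset
open scoped Kronecker

section CommRing

variable {K : Type*} [CommRing K]

theorem kronecker_mulVec_apply {m₁ m₂ m₃ n₁ n₂ n₃ : ℕ} (A : Matrix (Fin m₁) (Fin n₁) K)
    (B : Matrix (Fin m₂) (Fin n₂) K) (C : Matrix (Fin m₃) (Fin n₃) K)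
    (T : Tensor3 K n₁ n₂ n₃) (i : Fin m₁) (j : Fin m₂) (k : Fin m₃) :
    ((A ⊗ₖ (B ⊗ₖ C)) *ᵥ T) (i, j, k) =
      ∑ a, ∑ b, ∑ c, A i a * B j b * C k c * T (a, b, c) := by
  simp only [mulVec, dotProduct, Fintype.sum_prod_type, kroneckerMap_apply, mul_assoc]

theorem eq_kronecker_mulVec_iff {m₁ m₂ m₃ n₁ n₂ n₃ : ℕ} {S : Tensor3 K m₁ m₂ m₃}
    (A : Matrix (Fin m₁) (Fin n₁) K) (B : Matrix (Fin m₂) (Fin n₂) K)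
    (C : Matrix (Fin m₃) (Fin n₃) K) (T : Tensor3 K n₁ n₂ n₃) :
    S = (A ⊗ₖ (B ⊗ₖ C)) *ᵥ T ↔
      ∀ i j k, S (i, j, k) = ∑ a, ∑ b, ∑ c, A i a * B j b * C k c * T (a, b, c) := by
  simp only [funext_iff, Prod.forall, kronecker_mulVec_apply]

theorem kronecker_mulVec_kronecker_mulVec {m₁ m₂ m₃ l₁ l₂ l₃ n₁ n₂ n₃ : ℕ}
    (A : Matrix (Fin m₁) (Fin l₁) K) (B : Matrix (Fin m₂) (Fin l₂) K)
    (C : Matrix (Fin m₃) (Fin l₃) K) (A' : Matrix (Fin l₁) (Fin n₁) K)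
    (B' : Matrix (Fin l₂) (Fin n₂) K) (C' : Matrix (Fin l₃) (Fin n₃) K)
    (T : Tensor3 K n₁ n₂ n₃) :
    (A ⊗ₖ (B ⊗ₖ C)) *ᵥ ((A' ⊗ₖ (B' ⊗ₖ C')) *ᵥ T) =
      ((A * A') ⊗ₖ ((B * B') ⊗ₖ (C * C'))) *ᵥ T := by
  rw [mulVec_mulVec, mul_kronecker_mul, mul_kronecker_mul]

theorem kronecker_inv_mulVec_kronecker_mulVec {n₁ n₂ n₃ : ℕ}
    {g₁ : Matrix (Fin n₁) (Fin n₁) K} {g₂ : Matrix (Fin n₂) (Fin n₂) K}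
    {g₃ : Matrix (Fin n₃) (Fin n₃) K} (h₁ : IsUnit g₁) (h₂ : IsUnit g₂) (h₃ : IsUnit g₃)
    (T : Tensor3 K n₁ n₂ n₃) :
    (g₁⁻¹ ⊗ₖ (g₂⁻¹ ⊗ₖ g₃⁻¹)) *ᵥ ((g₁ ⊗ₖ (g₂ ⊗ₖ g₃)) *ᵥ T) = T := by
  rw [kronecker_mulVec_kronecker_mulVec, nonsing_inv_mul _ ((isUnit_iff_isUnit_det _).1 h₁),
    nonsing_inv_mul _ ((isUnit_iff_isUnit_det _).1 h₂),
    nonsing_inv_mul _ ((isUnit_iff_isUnit_det _).1 h₃), one_kronecker_one, one_kronecker_one,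
    one_mulVec]

theorem kronecker_mulVec_comp_prodMap {m₁ m₂ m₃ l₁ l₂ l₃ n₁ n₂ n₃ : ℕ}
    (A : Matrix (Fin m₁) (Fin n₁) K) (B : Matrix (Fin m₂) (Fin n₂) K)
    (C : Matrix (Fin m₃) (Fin n₃) K) (T : Tensor3 K n₁ n₂ n₃)
    (f : Fin l₁ → Fin m₁) (g : Fin l₂ → Fin m₂) (h : Fin l₃ → Fin m₃) :
    ((A ⊗ₖ (B ⊗ₖ C)) *ᵥ T) ∘ Prod.map f (Prod.map g h) =
      (A.submatrix f id ⊗ₖ (B.submatrix g id ⊗ₖ C.submatrix h id)) *ᵥ T := by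
  funext ⟨i, j, k⟩
  simp only [Function.comp_apply, Prod.map_apply, kronecker_mulVec_apply, submatrix_apply, id]

theorem restrict3_iff {m₁ m₂ m₃ n₁ n₂ n₃ : ℕ} {S : Tensor3 K m₁ m₂ m₃}
    {T : Tensor3 K n₁ n₂ n₃} :
    Restrict3 S T ↔ ∃ (A : Matrix (Fin m₁) (Fin n₁) K) (B : Matrix (Fin m₂) (Fin n₂) K)
      (C : Matrix (Fin m₃) (Fin n₃) K), S = (A ⊗ₖ (B ⊗ₖ C)) *ᵥ T := by
  simp only [Restrict3, eq_kronecker_mulVec_iff]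

theorem Restrict3.trans {m₁ m₂ m₃ l₁ l₂ l₃ n₁ n₂ n₃ : ℕ} {S : Tensor3 K m₁ m₂ m₃}
    {T : Tensor3 K l₁ l₂ l₃} {U : Tensor3 K n₁ n₂ n₃}
    (hST : Restrict3 S T) (hTU : Restrict3 T U) : Restrict3 S U := by
  obtain ⟨A, B, C, rfl⟩ := restrict3_iff.1 hST
  obtain ⟨A', B', C', rfl⟩ := restrict3_iff.1 hTU
  exact restrict3_iff.2 ⟨_, _, _, kronecker_mulVec_kronecker_mulVec ..⟩

theorem restrict3_comp_prodMap {m₁ m₂ m₃ n₁ n₂ n₃ : ℕ} (T : Tensor3 K n₁ n₂ n₃)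
    (f : Fin m₁ → Fin n₁) (g : Fin m₂ → Fin n₂) (h : Fin m₃ → Fin n₃) :
    Restrict3 (T ∘ Prod.map f (Prod.map g h)) T := by
  refine restrict3_iff.2 ⟨(1 : Matrix (Fin n₁) (Fin n₁) K).submatrix f id,
    (1 : Matrix (Fin n₂) (Fin n₂) K).submatrix g id,
    (1 : Matrix (Fin n₃) (Fin n₃) K).submatrix h id, ?_⟩
  rw [← kronecker_mulVec_comp_prodMap, one_kronecker_one, one_kronecker_one, one_mulVec]

theorem restrict3_mul_third {n₁ n₂ n₃ : ℕ} (T : Tensor3 K n₁ n₂ n₃) (w : Fin n₃ → K) :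
    Restrict3 (fun p => w p.2.2 * T p) T := by
  refine ⟨1, 1, diagonal w, fun i j k => ?_⟩
  simp [one_apply, diagonal_apply, ite_mul]

def rotate3 {n₁ n₂ n₃ : ℕ} (T : Tensor3 K n₁ n₂ n₃) : Tensor3 K n₂ n₃ n₁ :=
  fun p => T (p.2.2, p.1, p.2.1)

theorem rotate3_kronecker_mulVec {m₁ m₂ m₃ n₁ n₂ n₃ : ℕ} (A : Matrix (Fin m₁) (Fin n₁) K)
    (B : Matrix (Fin m₂) (Fin n₂) K) (C : Matrix (Fin m₃) (Fin n₃) K)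
    (T : Tensor3 K n₁ n₂ n₃) :
    rotate3 ((A ⊗ₖ (B ⊗ₖ C)) *ᵥ T) = (B ⊗ₖ (C ⊗ₖ A)) *ᵥ rotate3 T := by
  funext ⟨j, k, i⟩
  simp only [rotate3, kronecker_mulVec_apply]
  rw [sum_comm]
  refine sum_congr rfl fun b _ => ?_
  rw [sum_comm]
  exact sum_congr rfl fun c _ => sum_congr rfl fun a _ => by ring

theorem rotate3_unitTensor3 (r : ℕ) : rotate3 (unitTensor3 K r) = unitTensor3 K r := by
  funext ⟨i, j, k⟩
  simp only [rotate3, unitTensor3]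
  grind

theorem restrict3_unitTensor3_of_le {r m : ℕ} (h : r ≤ m) :
    Restrict3 (unitTensor3 K r) (unitTensor3 K m) := by
  have : unitTensor3 K r =
      unitTensor3 K m ∘ Prod.map (Fin.castLE h) (Prod.map (Fin.castLE h) (Fin.castLE h)) := by
    funext ⟨i, j, k⟩
    simp [unitTensor3, Fin.castLE_inj]
  rw [this]
  exact restrict3_comp_prodMap _ _ _ _

theorem mul_eq_one_of_unitTensor3_eq {m n₁ n₂ n₃ : ℕ} {A : Matrix (Fin m) (Fin n₁) K}
    {B : Matrix (Fin m) (Fin n₂) K} {C : Matrix (Fin m) (Fin n₃) K} {T : Tensor3 K n₁ n₂ n₃}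
    (h : unitTensor3 K m = (A ⊗ₖ (B ⊗ₖ C)) *ᵥ T) :
    A * Matrix.of (fun a j => ∑ b, ∑ c, B j b * C j c * T (a, b, c)) = 1 := by
  ext i j
  have hij := congrFun h (i, j, j)
  simp only [unitTensor3, and_true, kronecker_mulVec_apply] at hij
  rw [one_apply, hij, mul_apply]
  simp only [of_apply, mul_sum]
  exact sum_congr rfl fun a _ => sum_congr rfl fun b _ => sum_congr rfl fun c _ => by ring

theorem linearIndependent_row_of_mul_eq_one {m n : ℕ} {A : Matrix (Fin m) (Fin n) K}
    {F : Matrix (Fin n) (Fin m) K} (h : A * F = 1) : LinearIndependent K A.row := by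
  refine LinearIndependent.of_comp (vecMulLinear F) ?_
  have : vecMulLinear F ∘ A.row = (1 : Matrix (Fin m) (Fin m) K).row := by
    rw [← h]; funext i; rfl
  rw [this]
  exact linearIndependent_rows_of_isUnit isUnit_one

theorem linearIndependent_rows_of_unitTensor3_eq {m n₁ n₂ n₃ : ℕ}
    {A : Matrix (Fin m) (Fin n₁) K} {B : Matrix (Fin m) (Fin n₂) K}
    {C : Matrix (Fin m) (Fin n₃) K} {T : Tensor3 K n₁ n₂ n₃}
    (h : unitTensor3 K m = (A ⊗ₖ (B ⊗ₖ C)) *ᵥ T) :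
    LinearIndependent K A.row ∧ LinearIndependent K B.row ∧ LinearIndependent K C.row := by
  -- `I_m` is invariant under rotating the legs, which brings `B`, then `C`, to the front.
  have h' : unitTensor3 K m = (B ⊗ₖ (C ⊗ₖ A)) *ᵥ rotate3 T := by
    rw [← rotate3_unitTensor3, h, rotate3_kronecker_mulVec]
  have h'' : unitTensor3 K m = (C ⊗ₖ (A ⊗ₖ B)) *ᵥ rotate3 (rotate3 T) := by
    rw [← rotate3_unitTensor3, h', rotate3_kronecker_mulVec]
  exact ⟨linearIndependent_row_of_mul_eq_one (mul_eq_one_of_unitTensor3_eq h),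
    linearIndependent_row_of_mul_eq_one (mul_eq_one_of_unitTensor3_eq h'),
    linearIndependent_row_of_mul_eq_one (mul_eq_one_of_unitTensor3_eq h'')⟩

theorem memXr_of_comp_castLE_eq [Nontrivial K] {n r : ℕ} (hr : r ≤ n) {S : Tensor3 K n n n}
    (h : S ∘ Prod.map (Fin.castLE hr) (Prod.map (Fin.castLE hr) (Fin.castLE hr)) =
      unitTensor3 K r) : MemXr r S := by
  have hS : ∀ (i j k : Fin n) (hi : (i : ℕ) < r) (hj : (j : ℕ) < r) (hk : (k : ℕ) < r),
      S (i, j, k) = unitTensor3 K r (⟨i, hi⟩, ⟨j, hj⟩, ⟨k, hk⟩) :=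
    fun i j k hi hj hk => congrFun h (⟨i, hi⟩, ⟨j, hj⟩, ⟨k, hk⟩)
  refine ⟨fun i j k hi hj hk hne => ?_, fun i hi => ?_⟩
  · rw [hS i j k hi hj hk]
    simpa [unitTensor3, Fin.ext_iff] using hne
  · simp [hS i i i hi hi hi, unitTensor3]

end CommRing

section Field

variable {K : Type*} [Field K]

theorem LinearIndependent.exists_extension_castLE {V : Type*} [AddCommGroup V] [Module K V]
    {r n : ℕ} {v : Fin r → V}
    (hv : LinearIndependent K v) (hr : r ≤ n) (hn : n ≤ Module.finrank K V) :
    ∃ w : Fin n → V, LinearIndependent K w ∧ ∀ i, w (Fin.castLE hr i) = v i := by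
  induction n, hr using Nat.le_induction with
  | base => exact ⟨v, hv, fun i => rfl⟩
  | succ n hrn ih =>
    obtain ⟨w, hw, hwv⟩ := ih (by omega)
    obtain ⟨x, hx⟩ := exists_linearIndependent_snoc_of_lt_finrank hw (by omega)
    refine ⟨Fin.snoc w x, hx, fun i => ?_⟩
    rw [← hwv i]
    exact Fin.snoc_castSucc (α := fun _ => V) x w (Fin.castLE hrn i)

theorem exists_isUnit_submatrix_castLE_eq {r n : ℕ} (hr : r ≤ n)
    {A : Matrix (Fin r) (Fin n) K} (hA : LinearIndependent K A.row) :
    ∃ M : Matrix (Fin n) (Fin n) K, IsUnit M ∧ M.submatrix (Fin.castLE hr) id = A := by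
  obtain ⟨w, hw, hwA⟩ := hA.exists_extension_castLE hr (by simp)
  exact ⟨Matrix.of w, linearIndependent_rows_iff_isUnit.1 hw, funext hwA⟩

theorem le_of_restrict3_unitTensor3 {m n₁ n₂ n₃ : ℕ} {T : Tensor3 K n₁ n₂ n₃}
    (h : Restrict3 (unitTensor3 K m) T) : m ≤ n₁ := by
  obtain ⟨A, B, C, hABC⟩ := restrict3_iff.1 h
  simpa using (linearIndependent_rows_of_unitTensor3_eq hABC).1.fintype_card_le_finrank

theorem le_subrank3_iff {n₁ n₂ n₃ : ℕ} (T : Tensor3 K n₁ n₂ n₃) (r : ℕ) :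
    r ≤ subrank3 T ↔ Restrict3 (unitTensor3 K r) T := by
  have hbdd : BddAbove {m | Restrict3 (unitTensor3 K m) T} :=
    ⟨n₁, fun _ hm => le_of_restrict3_unitTensor3 hm⟩
  have hzero : Restrict3 (unitTensor3 K 0) T := ⟨0, 0, 0, fun i => i.elim0⟩
  exact ⟨fun h => (restrict3_unitTensor3_of_le h).trans (Nat.sSup_mem ⟨0, hzero⟩ hbdd),
    fun h => le_csSup hbdd h⟩

theorem restrict3_unitTensor3_of_memXr {n r : ℕ} (hr : r ≤ n) {S : Tensor3 K n n n}
    (hS : MemXr r S) : Restrict3 (unitTensor3 K r) S := by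
  set e : Fin r → Fin n := Fin.castLE hr
  have : unitTensor3 K r =
      fun p => (S (e p.2.2, e p.2.2, e p.2.2))⁻¹ * (S ∘ Prod.map e (Prod.map e e)) p := by
    funext ⟨i, j, k⟩
    by_cases hd : i = j ∧ j = k
    · obtain ⟨rfl, rfl⟩ := hd
      simp [unitTensor3, inv_mul_cancel₀ (hS.2 (e i) (by simp [e]))]
    · rw [Function.comp_apply, Prod.map_apply, Prod.map_apply,
        hS.1 (e i) (e j) (e k) (by simp [e]) (by simp [e]) (by simp [e])
          (by simpa [e, Fin.castLE_inj] using hd)]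
      simp [unitTensor3, hd]
  rw [this]
  exact (restrict3_mul_third _ fun k => (S (e k, e k, e k))⁻¹).trans
    (restrict3_comp_prodMap _ _ _ _)

end Field

theorem subrank_ge_iff_orbit_Xr_general (K : Type*) [Field K] (n r : ℕ) (hr : r ≤ n)
    (T : Tensor3 K n n n) :
    r ≤ subrank3 T ↔
      ∃ (g₁ g₂ g₃ : Matrix (Fin n) (Fin n) K) (S : Tensor3 K n n n),
        IsUnit g₁ ∧ IsUnit g₂ ∧ IsUnit g₃ ∧ MemXr r S ∧
        ∀ i j k, T (i, j, k) = ∑ a, ∑ b, ∑ c, g₁ i a * g₂ j b * g₃ k c * S (a, b, c) := by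
  simp_rw [le_subrank3_iff, ← eq_kronecker_mulVec_iff]
  constructor
  · intro h
    obtain ⟨A, B, C, hABC⟩ := restrict3_iff.1 h
    obtain ⟨hA, hB, hC⟩ := linearIndependent_rows_of_unitTensor3_eq hABC
    obtain ⟨g₁, hg₁, rfl⟩ := exists_isUnit_submatrix_castLE_eq hr hA
    obtain ⟨g₂, hg₂, rfl⟩ := exists_isUnit_submatrix_castLE_eq hr hB
    obtain ⟨g₃, hg₃, rfl⟩ := exists_isUnit_submatrix_castLE_eq hr hC
    refine ⟨g₁⁻¹, g₂⁻¹, g₃⁻¹, (g₁ ⊗ₖ (g₂ ⊗ₖ g₃)) *ᵥ T, isUnit_nonsing_inv_iff.2 hg₁,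
      isUnit_nonsing_inv_iff.2 hg₂, isUnit_nonsing_inv_iff.2 hg₃,
      memXr_of_comp_castLE_eq hr ?_, (kronecker_inv_mulVec_kronecker_mulVec hg₁ hg₂ hg₃ T).symm⟩
    rw [kronecker_mulVec_comp_prodMap, hABC]
  · rintro ⟨g₁, g₂, g₃, S, hg₁, hg₂, hg₃, hS, rfl⟩
    exact (restrict3_unitTensor3_of_memXr hr hS).trans
      (restrict3_iff.2 ⟨_, _, _, (kronecker_inv_mulVec_kronecker_mulVec hg₁ hg₂ hg₃ S).symm⟩)

/-- A tensor `T` in `K^{n,n,n}` has subrank at least `r` if and only if it is obtained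
from some `S` in `X_r` by applying invertible matrices `g₁, g₂, g₃` to the three legs:
the set of tensors of subrank at least `r` is the image of
`ψ_r : GL_n × GL_n × GL_n × X_r → K^{n,n,n}`. -/
theorem subrank_ge_iff_orbit_Xr (K : Type*) [Field K] (n r : ℕ) (hn : 0 < n) (hr : r ≤ n)
    (T : Tensor3 K n n n) :
    r ≤ subrank3 T ↔
      ∃ (g₁ g₂ g₃ : Matrix (Fin n) (Fin n) K) (S : Tensor3 K n n n),
        IsUnit g₁ ∧ IsUnit g₂ ∧ IsUnit g₃ ∧ MemXr r S ∧
        ∀ i j k, T (i, j, k) = ∑ a, ∑ b, ∑ c, g₁ i a * g₂ j b * g₃ k c * S (a, b, c) :=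
  subrank_ge_iff_orbit_Xr_general K n r hr T
end

section
/- Let K be a field and n = 2m an even positive integer. There do not exist linear subspaces R, C ⊆ K^n, each of dimension m, such that every n×n matrix M over K can be written as M = A + B where every row of A (viewed as a vector in K^n) lies in R and every column of B (viewed as a vector in K^n) lies in C. -/
/-!
The matrices with all rows in `R` form a subspace of dimension `n · dim R = n²/2`, and likewise
for the matrices with all columns in `C`. As these dimensions add up to `n²`, the two subspaces
can only span the matrix space if they meet trivially; but for nonzero `c ∈ C` and `r ∈ R` the
rank-one matrix `c rᵀ` lies in both.
-/

open Module Matrix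

namespace Submodule

variable {R ι : Type*} {φ : ι → Type*} [Semiring R] [∀ i, AddCommMonoid (φ i)]
  [∀ i, Module R (φ i)]

def piUnivEquiv (p : ∀ i, Submodule R (φ i)) : pi Set.univ p ≃ₗ[R] ∀ i, p i where
  toFun x i := ⟨x.1 i, x.2 i (Set.mem_univ i)⟩
  invFun y := ⟨fun i => y i, fun i _ => (y i).2⟩
  map_add' _ _ := rfl
  map_smul' _ _ := rfl
  left_inv _ := rfl
  right_inv _ := rfl

end Submodule

namespace Matrix

section CommSemiring

variable {K m n : Type*} [CommSemiring K]

def withRowsIn (R : Submodule K (n → K)) : Submodule K (Matrix m n K) :=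
  Submodule.pi Set.univ fun _ => R

def withColsIn (C : Submodule K (m → K)) : Submodule K (Matrix m n K) :=
  (withRowsIn C).comap (transposeLinearEquiv m n K K).toLinearMap

theorem mem_withRowsIn {R : Submodule K (n → K)} {A : Matrix m n K} :
    A ∈ withRowsIn R ↔ ∀ i, A.row i ∈ R :=
  ⟨fun h i => h i trivial, fun h i _ => h i⟩

theorem mem_withColsIn {C : Submodule K (m → K)} {A : Matrix m n K} :
    A ∈ withColsIn C ↔ ∀ j, A.col j ∈ C :=
  mem_withRowsIn

theorem vecMulVec_mem_withRowsIn_inf_withColsIn {R : Submodule K (n → K)}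
    {C : Submodule K (m → K)} {c : m → K} {r : n → K} (hc : c ∈ C) (hr : r ∈ R) :
    vecMulVec c r ∈ withRowsIn R ⊓ withColsIn C := by
  refine ⟨mem_withRowsIn.2 fun i => ?_, mem_withColsIn.2 fun j => ?_⟩
  · rw [row_vecMulVec]
    exact R.smul_mem _ hr
  · rw [col_vecMulVec, op_smul_eq_smul]
    exact C.smul_mem _ hc

theorem withRowsIn_inf_withColsIn_ne_bot [NoZeroDivisors K] {R : Submodule K (n → K)}
    {C : Submodule K (m → K)} (hR : R ≠ ⊥) (hC : C ≠ ⊥) :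
    withRowsIn R ⊓ withColsIn C ≠ ⊥ := by
  obtain ⟨r, hr, hr0⟩ := R.exists_mem_ne_zero_of_ne_bot hR
  obtain ⟨c, hc, hc0⟩ := C.exists_mem_ne_zero_of_ne_bot hC
  obtain ⟨i, hci⟩ := Function.ne_iff.mp hc0
  obtain ⟨j, hrj⟩ := Function.ne_iff.mp hr0
  refine (Submodule.ne_bot_iff _).2
    ⟨vecMulVec c r, vecMulVec_mem_withRowsIn_inf_withColsIn hc hr, fun h => ?_⟩
  exact mul_ne_zero hci hrj congr($h i j)

end CommSemiring

variable {K m n : Type*} [Field K] [Fintype m] [Fintype n]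

theorem finrank_withRowsIn (R : Submodule K (n → K)) :
    finrank K (withRowsIn (m := m) R) = Fintype.card m * finrank K R := by
  refine (Submodule.piUnivEquiv fun _ : m => R).finrank_eq.trans ?_
  simp [finrank_pi_fintype]

theorem finrank_withColsIn (C : Submodule K (m → K)) :
    finrank K (withColsIn (n := n) C) = Fintype.card n * finrank K C := by
  rw [withColsIn, (LinearEquiv.ofSubmodule' _ _).finrank_eq, finrank_withRowsIn]

theorem card_mul_card_lt_of_withRowsIn_sup_withColsIn_eq_top {R : Submodule K (n → K)}
    {C : Submodule K (m → K)} (hR : R ≠ ⊥) (hC : C ≠ ⊥)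
    (hspan : withRowsIn R ⊔ withColsIn C = ⊤) :
    Fintype.card m * Fintype.card n <
      Fintype.card m * finrank K R + Fintype.card n * finrank K C := by
  have hinf : finrank K ↥(withRowsIn R ⊓ withColsIn C) ≠ 0 :=
    Submodule.finrank_eq_zero.not.2 (withRowsIn_inf_withColsIn_ne_bot hR hC)
  have hdim := Submodule.finrank_sup_add_finrank_inf_eq (withRowsIn R) (withColsIn C)
  rw [hspan, finrank_top, finrank_matrix, finrank_self, mul_one, finrank_withRowsIn,
    finrank_withColsIn] at hdim
  omega

end Matrix

/-- For `n = 2m` even, there are no subspaces `R, C ⊆ K^n` of dimension `m = n/2` such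
that every `n × n` matrix `M` can be written as `M = A + B` with all rows of `A` in `R`
and all columns of `B` in `C`. -/
theorem no_matrix_space_decomposition (K : Type*) [Field K] (m : ℕ) (hm : 0 < m) :
    ¬ ∃ (R C : Submodule K (Fin (2 * m) → K)),
        Module.finrank K R = m ∧ Module.finrank K C = m ∧
        ∀ M : Matrix (Fin (2 * m)) (Fin (2 * m)) K,
          ∃ A B : Matrix (Fin (2 * m)) (Fin (2 * m)) K,
            M = A + B ∧ (∀ i, (fun j => A i j) ∈ R) ∧ (∀ j, (fun i => B i j) ∈ C) := by
  rintro ⟨R, C, hR, hC, hdecomp⟩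
  have hspan : withRowsIn R ⊔ withColsIn C = ⊤ := by
    refine Submodule.eq_top_iff'.2 fun M => ?_
    obtain ⟨A, B, rfl, hA, hB⟩ := hdecomp M
    exact Submodule.add_mem_sup (mem_withRowsIn.2 hA) (mem_withColsIn.2 hB)
  have hne_bot {p : Submodule K (Fin (2 * m) → K)} (hp : finrank K p = m) : p ≠ ⊥ := by
    rintro rfl
    rw [finrank_bot] at hp
    omega
  have hlt := card_mul_card_lt_of_withRowsIn_sup_withColsIn_eq_top (hne_bot hR) (hne_bot hC) hspan
  rw [Fintype.card_fin, hR, hC] at hlt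
  nlinarith
end

section
/- Let K be an infinite field, d ≥ 2 an integer, n₁,…,n_{d−1}, n_d′, n_d″ positive integers, and a_d, a₁′,…,a_{d−1}′, a₁″,…,a_{d−1}″ nonnegative integers. Suppose there exists a linear subspace W_d ⊆ K^{n₁,…,n_{d−1}} of dimension a_d, subspaces W_i′ (i = 1,…,d−1) of the order-(d−1) tensor space of format (n₁,…,n_{i−1},n_{i+1},…,n_{d−1},n_d′) with dim W_i′ = a_i′ such that W₁′[1] + ⋯ + W_{d−1}′[d−1] + W_d[d] = K^{n₁,…,n_{d−1},n_d′}, and subspaces W_i″ (i = 1,…,d−1) of the order-(d−1) tensor space of format (n₁,…,n_{i−1},n_{i+1},…,n_{d−1},n_d″) with dim W_i″ = a_i″ such that W₁″[1] + ⋯ + W_{d−1}″[d−1] + W_d[d] = K^{n₁,…,n_{d−1},n_d″}. Then there exist subspaces W_i (i = 1,…,d−1) of the order-(d−1) tensor spaces of format (n₁,…,n_{i−1},n_{i+1},…,n_{d−1},n_d′+n_d″) with dim W_i = a_i′ + a_i″ such that W₁[1] + ⋯ + W_{d−1}[d−1] + W_d[d] = K^{n₁,…,n_{d−1},n_d′+n_d″}.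 (Direct sum construction for tensor space decompositions.) -/
/-!
Splitting the last index range `Fin (n' + n'')` into its first `n'` and its last `n''` values
identifies the tensor space of last side length `n' + n''` with the product of the tensor spaces
of last side lengths `n'` and `n''`. Under this identification the slice conditions are taken
separately on each factor, so `(W'ᵢ × W''ᵢ)[i] = W'ᵢ[i] × W''ᵢ[i]` and `W_d[d] = W_d[d] × W_d[d]`.
Since a sum of products of subspaces is the product of the sums, taking `Wᵢ = W'ᵢ × W''ᵢ` turns
the two given decompositions into one of the big space, and `dim Wᵢ = a'ᵢ + a''ᵢ`.
-/

set_option linter.unusedVariables false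

/-- For an order-`d` tensor space of format `(n₀, …, n_{d−2}, m)` (written as
`(∀ j : Fin (d−1), Fin (n j)) → Fin m → K`, with the last index separated) and a
subspace `W` of the order-`(d−1)` tensor space of format `(n₀, …, n_{d−2})`, the
subspace `W[d]` of tensors all of whose direction-`d` slices lie in `W`. -/
def lastSlice {K : Type*} [Field K] {s m : ℕ} {n : Fin s → ℕ}
    (W : Submodule K ((∀ j, Fin (n j)) → K)) :
    Submodule K ((∀ j, Fin (n j)) → Fin m → K) where
  carrier := {T | ∀ c : Fin m, (fun f => T f c) ∈ W}
  add_mem' := fun hS hT c => W.add_mem (hS c) (hT c)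
  zero_mem' := fun c => W.zero_mem
  smul_mem' := fun a S hS c => W.smul_mem a (hS c)

/-- For `i` among the first `d−1` directions and a subspace `W` of the order-`(d−1)`
tensor space of format `(n₀, …, n̂ᵢ, …, n_{d−2}, m)`, the subspace `W[i]` of tensors
all of whose direction-`i` slices lie in `W`. -/
def midSlice {K : Type*} [Field K] {e m : ℕ} {n : Fin (e + 1) → ℕ} (i : Fin (e + 1))
    (W : Submodule K ((∀ j : Fin e, Fin (n (i.succAbove j))) → Fin m → K)) :
    Submodule K ((∀ j, Fin (n j)) → Fin m → K) where
  carrier := {T | ∀ c : Fin (n i), (fun f => T (i.insertNth c f)) ∈ W}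
  add_mem' := fun hS hT c => W.add_mem (hS c) (hT c)
  zero_mem' := fun c => W.zero_mem
  smul_mem' := fun a S hS c => W.smul_mem a (hS c)

namespace Submodule

theorem iSup_prod_prod {R M M₂ : Type*} [Semiring R] [AddCommMonoid M] [AddCommMonoid M₂]
    [Module R M] [Module R M₂] {ι : Sort*} (p : ι → Submodule R M) (q : ι → Submodule R M₂) :
    ⨆ i, (p i).prod (q i) = (⨆ i, p i).prod (⨆ i, q i) := by
  simp only [LinearMap.prod_eq_sup_map, map_iSup, iSup_sup_eq]

theorem finrank_prod {K V V₂ : Type*} [DivisionRing K] [AddCommGroup V] [AddCommGroup V₂]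
    [Module K V] [Module K V₂] (p : Submodule K V) (q : Submodule K V₂)
    [FiniteDimensional K p] [FiniteDimensional K q] :
    Module.finrank K (p.prod q) = Module.finrank K p + Module.finrank K q :=
  calc Module.finrank K (p.prod q)
      = Module.finrank K (LinearMap.range (p.subtype.prodMap q.subtype)) := by
        rw [LinearMap.range_prodMap, range_subtype, range_subtype]
    _ = Module.finrank K (p × q) := LinearMap.finrank_range_of_inj <|
        Prod.map_injective.mpr ⟨p.injective_subtype, q.injective_subtype⟩
    _ = Module.finrank K p + Module.finrank K q := Module.finrank_prod

end Submodule

def appendLastIndex (R α : Type*) [Semiring R] (m m' : ℕ) :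
    ((α → Fin m → R) × (α → Fin m' → R)) ≃ₗ[R] (α → Fin (m + m') → R) where
  toFun P f := Fin.append (P.1 f) (P.2 f)
  invFun T := (fun f c => T f (Fin.castAdd m' c), fun f c => T f (Fin.natAdd m c))
  map_add' _ _ := by ext f c; refine Fin.addCases (fun _ => ?_) (fun _ => ?_) c <;> simp
  map_smul' _ _ := by ext f c; refine Fin.addCases (fun _ => ?_) (fun _ => ?_) c <;> simp
  left_inv P := by simp
  right_inv T := funext fun _ => Fin.append_castAdd_natAdd

section

variable {K : Type*} [Field K] {m m' : ℕ}

theorem midSlice_map_appendLastIndex {e : ℕ} {n : Fin (e + 1) → ℕ} (i : Fin (e + 1))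
    (V' : Submodule K ((∀ j : Fin e, Fin (n (i.succAbove j))) → Fin m → K))
    (V'' : Submodule K ((∀ j : Fin e, Fin (n (i.succAbove j))) → Fin m' → K)) :
    midSlice i ((V'.prod V'').map (appendLastIndex K _ m m').toLinearMap) =
      ((midSlice i V').prod (midSlice i V'')).map (appendLastIndex K _ m m').toLinearMap := by
  simp only [Submodule.map_equiv_eq_comap_symm]
  ext T
  exact forall_and

theorem lastSlice_eq_map_appendLastIndex {s : ℕ} {n : Fin s → ℕ}
    (W : Submodule K ((∀ j, Fin (n j)) → K)) :
    lastSlice (m := m + m') W =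
      ((lastSlice W).prod (lastSlice W)).map (appendLastIndex K _ m m').toLinearMap := by
  rw [Submodule.map_equiv_eq_comap_symm]
  ext T
  exact Fin.forall_fin_add _

end

/-- Tensors of order `d = e + 2`: the first `d − 1` side lengths are `n`, the last one is `nd'`,
`nd''` or `nd' + nd''`. -/
theorem direct_sum_construction_general (K : Type*) [Field K]
    (e : ℕ) (n : Fin (e + 1) → ℕ)
    (nd' nd'' : ℕ)
    (a' a'' : Fin (e + 1) → ℕ)
    (Wd : Submodule K ((∀ j, Fin (n j)) → K))
    (W' : ∀ i : Fin (e + 1),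
      Submodule K ((∀ j : Fin e, Fin (n (i.succAbove j))) → Fin nd' → K))
    (hW' : ∀ i, Module.finrank K (W' i) = a' i)
    (hsum' : (⨆ i, midSlice i (W' i)) ⊔ lastSlice (m := nd') Wd = ⊤)
    (W'' : ∀ i : Fin (e + 1),
      Submodule K ((∀ j : Fin e, Fin (n (i.succAbove j))) → Fin nd'' → K))
    (hW'' : ∀ i, Module.finrank K (W'' i) = a'' i)
    (hsum'' : (⨆ i, midSlice i (W'' i)) ⊔ lastSlice (m := nd'') Wd = ⊤) :
    ∃ W : ∀ i : Fin (e + 1),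
        Submodule K ((∀ j : Fin e, Fin (n (i.succAbove j))) → Fin (nd' + nd'') → K),
      (∀ i, Module.finrank K (W i) = a' i + a'' i) ∧
      (⨆ i, midSlice i (W i)) ⊔ lastSlice (m := nd' + nd'') Wd = ⊤ := by
  refine ⟨fun i => ((W' i).prod (W'' i)).map (appendLastIndex K _ nd' nd'').toLinearMap,
    fun i => ?_, ?_⟩
  · rw [LinearEquiv.finrank_map_eq, Submodule.finrank_prod, hW', hW'']
  · rw [lastSlice_eq_map_appendLastIndex]
    simp only [midSlice_map_appendLastIndex, ← Submodule.map_iSup, ← Submodule.map_sup,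
      Submodule.iSup_prod_prod, Submodule.prod_sup_prod, hsum', hsum'', Submodule.prod_top,
      Submodule.map_top, LinearEquiv.range]

/-- Direct sum construction for tensor space decompositions, for tensors of order
`d = e + 2 ≥ 2` with the first `d − 1` side lengths given by `n : Fin (e+1) → ℕ` and
last side length `nd′` resp. `nd″`: two decompositions sharing the same last-direction
subspace `W_d` combine to a decomposition with last side length `nd′ + nd″`. -/
theorem direct_sum_construction (K : Type*) [Field K] [Infinite K]
    (e : ℕ) (n : Fin (e + 1) → ℕ) (hn : ∀ j, 0 < n j)
    (nd' nd'' : ℕ) (hnd' : 0 < nd') (hnd'' : 0 < nd'')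
    (ad : ℕ) (a' a'' : Fin (e + 1) → ℕ)
    (Wd : Submodule K ((∀ j, Fin (n j)) → K))
    (hWd : Module.finrank K Wd = ad)
    (W' : ∀ i : Fin (e + 1),
      Submodule K ((∀ j : Fin e, Fin (n (i.succAbove j))) → Fin nd' → K))
    (hW' : ∀ i, Module.finrank K (W' i) = a' i)
    (hsum' : (⨆ i, midSlice i (W' i)) ⊔ lastSlice (m := nd') Wd = ⊤)
    (W'' : ∀ i : Fin (e + 1),
      Submodule K ((∀ j : Fin e, Fin (n (i.succAbove j))) → Fin nd'' → K))
    (hW'' : ∀ i, Module.finrank K (W'' i) = a'' i)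
    (hsum'' : (⨆ i, midSlice i (W'' i)) ⊔ lastSlice (m := nd'') Wd = ⊤) :
    ∃ W : ∀ i : Fin (e + 1),
        Submodule K ((∀ j : Fin e, Fin (n (i.succAbove j))) → Fin (nd' + nd'') → K),
      (∀ i, Module.finrank K (W i) = a' i + a'' i) ∧
      (⨆ i, midSlice i (W i)) ⊔ lastSlice (m := nd' + nd'') Wd = ⊤ :=
  direct_sum_construction_general K e n nd' nd'' a' a'' Wd W' hW' hsum' W'' hW'' hsum''
end

section
/- Let K be an infinite field. There exist a linear subspace X₁ ⊆ Mat_{2,2} of dimension 3 and a linear subspace X₃ ⊆ Mat_{2,2} of dimension 1 such that X₁[1] + X₃[3] = K^{2,2,2}. (For instance, X₁ the space of symmetric 2×2 matrices and X₃ the span of the identity matrix.) -/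
set_option linter.unusedVariables false

open Matrix

section

variable {K : Type*} [Field K]

/-- If `c ↦ (φ (A i ⊗ c))ᵢ` is onto `K^{n₁}`, every tensor `T` splits as `(T - C) + C` with
`C = A ⊗ c`, where `c` is chosen so that `φ` kills the slices of `T - C`. -/
theorem sliceSub1_ker_sup_sliceSub3_span_eq_top {n₁ n₂ n₃ : ℕ}
    (φ : Matrix (Fin n₂) (Fin n₃) K →ₗ[K] K) (A : Matrix (Fin n₁) (Fin n₂) K)
    (hφA : ∀ v : Fin n₁ → K, ∃ c : Fin n₃ → K, ∀ i, φ (vecMulVec (A i) c) = v i) :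
    sliceSub1 (LinearMap.ker φ) ⊔ sliceSub3 (K ∙ A) = ⊤ := by
  refine eq_top_iff.mpr fun T _ => ?_
  obtain ⟨c, hc⟩ := hφA fun i => φ (of fun j k => T (i, j, k))
  let C : Tensor3 K n₁ n₂ n₃ := fun p => A p.1 p.2.1 * c p.2.2
  have hC : C ∈ sliceSub3 (K ∙ A) := fun k =>
    Submodule.mem_span_singleton.mpr ⟨c k, by ext i j; simp [C, mul_comm]⟩
  have hTC : T - C ∈ sliceSub1 (LinearMap.ker φ) := fun i => by
    have hslice : of (fun j k => (T - C) (i, j, k)) =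
        of (fun j k => T (i, j, k)) - vecMulVec (A i) c := by
      ext j k; simp [C, vecMulVec_apply]
    rw [LinearMap.mem_ker, hslice, map_sub, hc, sub_self]
  simpa using Submodule.add_mem_sup hTC hC

variable (K) in
/-- The kernel of `offDiagDiff` is the space of symmetric `2 × 2` matrices. -/
def offDiagDiff : Matrix (Fin 2) (Fin 2) K →ₗ[K] K :=
  entryLinearMap K K 0 1 - entryLinearMap K K 1 0

theorem exists_offDiagDiff_vecMulVec_one_eq (v : Fin 2 → K) :
    ∃ c : Fin 2 → K, ∀ i,
      offDiagDiff K (vecMulVec ((1 : Matrix (Fin 2) (Fin 2) K) i) c) = v i :=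
  ⟨![-v 1, v 0], fun i => by fin_cases i <;> simp [offDiagDiff, one_apply]⟩

variable (K) in
theorem finrank_ker_offDiagDiff : Module.finrank K (LinearMap.ker (offDiagDiff K)) = 3 := by
  have hne : offDiagDiff K ≠ 0 := fun h => by
    simpa [offDiagDiff] using LinearMap.congr_fun h (single 0 1 1)
  have := Module.Dual.finrank_ker_add_one_of_ne_zero hne
  simp only [Module.finrank_matrix, Module.finrank_self, Fintype.card_fin] at this
  omega

end

theorem tensor_space_decomposition_222_general (K : Type*) [Field K] :
    ∃ (X₁ X₃ : Submodule K (Matrix (Fin 2) (Fin 2) K)),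
      Module.finrank K X₁ = 3 ∧ Module.finrank K X₃ = 1 ∧
      sliceSub1 (n₁ := 2) X₁ ⊔ sliceSub3 (n₃ := 2) X₃ = ⊤ :=
  ⟨LinearMap.ker (offDiagDiff K), K ∙ 1, finrank_ker_offDiagDiff K,
    finrank_span_singleton one_ne_zero,
    sliceSub1_ker_sup_sliceSub3_span_eq_top _ _ exists_offDiagDiff_vecMulVec_one_eq⟩

/-- There exist a 3-dimensional subspace `X₁ ⊆ Mat_{2,2}` and a 1-dimensional subspace
`X₃ ⊆ Mat_{2,2}` such that `X₁[1] + X₃[3] = K^{2,2,2}`. -/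
theorem tensor_space_decomposition_222 (K : Type*) [Field K] [Infinite K] :
    ∃ (X₁ X₃ : Submodule K (Matrix (Fin 2) (Fin 2) K)),
      Module.finrank K X₁ = 3 ∧ Module.finrank K X₃ = 1 ∧
      sliceSub1 (n₁ := 2) X₁ ⊔ sliceSub3 (n₃ := 2) X₃ = ⊤ :=
  tensor_space_decomposition_222_general K
end
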